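/- Let (E,d) be a metric space and let α > 1 be a countable ordinal. Suppose that for every ordinal β with 0 < β < α, every natural number p, and every compact countable subset K̃ of E with Cantor–Bendixson characteristic (β,p), the subspace K̃ is homeomorphic to the ordinal ω^β·p + 1 with its order topology. Then every compact countable subset K of E with Cantor–Bendixson characteristic (α,1) is homeomorphic to the ordinal ω^α + 1 with its order topology. -/

import Mathlib

/-!
Let `cbDeriv K α = {x₀}`. Choose radii `r n ↓ 0` avoiding the countably many distances from `x₀`
to points of `K`, such that every annulus `r (n + 1) < dist · x₀ < r n` meets the derived set
`K'`. The pieces `K ∩ annulus` are then clopen in `K`, partition `K \ {x₀}`, and have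
characteristic `(βₙ, pₙ)` with `0 < βₙ < α`, so each is homeomorphic to `ω ^ βₙ * pₙ + 1`. Laying
these intervals end to end and sending `x₀` to their supremum gives a continuous bijection from `K`
onto an ordinal interval. The supremum is `ω ^ α`: since `x₀ ∈ K^(γ + 1)` for every `γ < α`, points
of `K^(γ)` come arbitrarily close to `x₀`, so `βₙ ≥ γ` for infinitely many `n`.
-/

open Ordinal Set

/-- The `α`-th Cantor–Bendixson derivative of a set `A`, defined by transfinite
recursion: `A^(0) = A`, `A^(β+1) = (A^(β))'` (derived set in the ambient space),
and `A^(λ) = ⋂_{γ<λ} A^(γ)` at nonzero limit ordinals. -/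
noncomputable def cbDeriv {X : Type*} [TopologicalSpace X] (A : Set X) (o : Ordinal) : Set X :=
  Ordinal.limitRecOn o A (fun _ ih => derivedSet ih)
    (fun o _ ih => ⋂ (β : Ordinal) (h : β < o), ih β h)

/-- `A` has Cantor–Bendixson characteristic `(α, p)`: `α` is the least ordinal such
that the `α`-th Cantor–Bendixson derivative of `A` is finite, and that derivative has
exactly `p` elements. -/
def HasCBChar {X : Type*} [TopologicalSpace X] (A : Set X) (α : Ordinal) (p : ℕ) : Prop :=
  (cbDeriv A α).Finite ∧ (∀ β < α, ¬ (cbDeriv A β).Finite) ∧ (cbDeriv A α).ncard = p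

open Filter Topology Function

section CantorBendixson

variable {X : Type*} [TopologicalSpace X] {A K O : Set X}

theorem cbDeriv_zero (A : Set X) : cbDeriv A 0 = A := limitRecOn_zero ..

theorem cbDeriv_add_one (A : Set X) (o : Ordinal) :
    cbDeriv A (o + 1) = derivedSet (cbDeriv A o) := limitRecOn_add_one ..

theorem cbDeriv_limit (A : Set X) {o : Ordinal} (ho : Order.IsSuccLimit o) :
    cbDeriv A o = ⋂ β < o, cbDeriv A β := limitRecOn_limit _ _ _ _ ho

theorem cbDeriv_one (A : Set X) : cbDeriv A 1 = derivedSet A := by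
  rw [← zero_add 1, cbDeriv_add_one, cbDeriv_zero]

theorem derivedSet_inter_of_isOpen (hO : IsOpen O) (h : IsClosed (A ∩ O)) :
    derivedSet (A ∩ O) = derivedSet A ∩ O := by
  refine subset_antisymm (fun x hx => ⟨derivedSet_mono _ _ inter_subset_left hx,
    ((isClosed_iff_derivedSet_subset _).1 h hx).2⟩) ?_
  rintro x ⟨hx, hxO⟩
  simpa only [mem_derivedSet, inter_comm] using hx.nhds_inter (hO.mem_nhds hxO)

variable [T1Space X]

theorem IsClosed.isClosed_cbDeriv_and_subset (hA : IsClosed A) (o : Ordinal) :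
    IsClosed (cbDeriv A o) ∧ cbDeriv A o ⊆ A := by
  induction o using Ordinal.limitRecOn with
  | zero => exact ⟨(cbDeriv_zero A).symm ▸ hA, (cbDeriv_zero A).subset⟩
  | add_one o ih =>
    rw [cbDeriv_add_one]
    exact ⟨isClosed_derivedSet _,
      ((isClosed_iff_derivedSet_subset _).1 ih.1).trans ih.2⟩
  | limit o ho ih =>
    rw [cbDeriv_limit A ho]
    exact ⟨isClosed_biInter fun β hβ => (ih β hβ).1,
      (iInter₂_subset 0 ho.pos).trans (cbDeriv_zero A).subset⟩

theorem IsClosed.isClosed_cbDeriv (hA : IsClosed A) (o : Ordinal) : IsClosed (cbDeriv A o) :=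
  (hA.isClosed_cbDeriv_and_subset o).1

theorem IsClosed.cbDeriv_subset (hA : IsClosed A) (o : Ordinal) : cbDeriv A o ⊆ A :=
  (hA.isClosed_cbDeriv_and_subset o).2

theorem IsClosed.cbDeriv_anti (hA : IsClosed A) : Antitone (cbDeriv A) := by
  intro b c hbc
  induction c using Ordinal.limitRecOn with
  | zero => rw [nonpos_iff_eq_zero.1 hbc]
  | add_one c ih =>
    rcases (Order.le_succ_iff_eq_or_le.1 (Order.succ_eq_add_one c ▸ hbc)) with h | h
    · rw [← Order.succ_eq_add_one, h]
    · rw [cbDeriv_add_one]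
      exact ((isClosed_iff_derivedSet_subset _).1 (hA.isClosed_cbDeriv c)).trans (ih h)
  | limit c hc ih =>
    rcases hbc.eq_or_lt with rfl | h
    · rfl
    · rw [cbDeriv_limit A hc]
      exact iInter₂_subset b h

theorem cbDeriv_inter_of_isOpen (hA : IsClosed A) (hO : IsOpen O) (hAO : IsClosed (A ∩ O))
    (o : Ordinal) : cbDeriv (A ∩ O) o = cbDeriv A o ∩ O := by
  induction o using Ordinal.limitRecOn with
  | zero => rw [cbDeriv_zero, cbDeriv_zero]
  | add_one o ih =>
    have hclosed : IsClosed (cbDeriv A o ∩ O) := by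
      rw [← inter_eq_self_of_subset_left (hA.cbDeriv_subset o), inter_assoc]
      exact (hA.isClosed_cbDeriv o).inter hAO
    rw [cbDeriv_add_one, cbDeriv_add_one, ih, derivedSet_inter_of_isOpen hO hclosed]
  | limit o ho ih =>
    rw [cbDeriv_limit _ ho, cbDeriv_limit _ ho]
    change ⋂ β ∈ Iio o, _ = (⋂ β ∈ Iio o, _) ∩ O
    rw [← biInter_inter ⟨0, ho.pos⟩]
    exact iInter₂_congr ih

theorem IsCompact.cbDeriv_nonempty (hA : IsCompact A) (hAc : IsClosed A) (hne : A.Nonempty)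
    {o : Ordinal} (h : ∀ β < o, (cbDeriv A β).Infinite) : (cbDeriv A o).Nonempty := by
  induction o using Ordinal.limitRecOn with
  | zero => rwa [cbDeriv_zero]
  | add_one o _ =>
    obtain ⟨x, -, hx⟩ := (h o (lt_add_one o)).exists_accPt_of_subset_isCompact hA
      (hAc.cbDeriv_subset o)
    exact ⟨x, (cbDeriv_add_one A o).symm ▸ hx⟩
  | limit o ho _ =>
    rw [cbDeriv_limit A ho]
    change (⋂ β ∈ Iio o, _).Nonempty
    rw [biInter_eq_iInter]
    have : Nonempty (Iio o) := ⟨⟨0, ho.pos⟩⟩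
    refine IsCompact.nonempty_iInter_of_directed_nonempty_isCompact_isClosed _
      (Antitone.directed_ge fun β γ h => hAc.cbDeriv_anti h) (fun β => (h β β.2).nonempty)
      (fun β => hA.of_isClosed_subset (hAc.isClosed_cbDeriv β) (hAc.cbDeriv_subset β))
      (fun β => hAc.isClosed_cbDeriv β)

theorem IsCompact.exists_hasCBChar (hA : IsCompact A) (hAc : IsClosed A) (hne : A.Nonempty)
    {α : Ordinal} (hα : cbDeriv A α = ∅) : ∃ β < α, ∃ p, 0 < p ∧ HasCBChar A β p := by
  set S := {β | (cbDeriv A β).Finite}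
  have hαS : α ∈ S := by simp [S, hα]
  obtain ⟨β, hβ⟩ : ∃ β, β = sInf S := ⟨_, rfl⟩
  have hβS : β ∈ S := hβ ▸ csInf_mem ⟨α, hαS⟩
  have hβmin : ∀ γ < β, (cbDeriv A γ).Infinite := fun γ hγ =>
    notMem_of_lt_csInf' (s := S) (hβ ▸ hγ)
  have hβne : (cbDeriv A β).Nonempty := hA.cbDeriv_nonempty hAc hne hβmin
  refine ⟨β, (hβ ▸ csInf_le' hαS).lt_of_ne ?_, _, (ncard_pos hβS).2 hβne, hβS, hβmin, rfl⟩
  rintro rfl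
  exact not_nonempty_empty (hα ▸ hβne)

theorem HasCBChar.pos {β : Ordinal} {p : ℕ} (h : HasCBChar A β p)
    (hA : (derivedSet A).Nonempty) : 0 < β := by
  refine pos_iff_ne_zero.2 fun hβ => ?_
  obtain ⟨x, hx⟩ := hA
  exact (Set.Infinite.of_accPt hx) (cbDeriv_zero A ▸ hβ ▸ h.1)

theorem HasCBChar.le_of_nonempty {β γ : Ordinal} {p : ℕ} (h : HasCBChar A β p)
    (hA : IsClosed A) (hγ : (cbDeriv A γ).Nonempty) : γ ≤ β := by
  refine not_lt.1 fun hβγ => ?_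
  obtain ⟨x, hx⟩ := hγ
  have := hA.cbDeriv_anti (Order.add_one_le_of_lt hβγ) hx
  rw [cbDeriv_add_one] at this
  exact (Set.Infinite.of_accPt this) h.1

theorem IsCompact.exists_hasCBChar_inter_of_isOpen (hK : IsCompact K) (hKc : IsClosed K)
    (hO : IsOpen O) (hKO : IsClosed (K ∩ O)) {α : Ordinal} (hα : cbDeriv K α ∩ O = ∅)
    (hder : (derivedSet K ∩ O).Nonempty) :
    ∃ β, 0 < β ∧ β < α ∧ ∃ p, 0 < p ∧ HasCBChar (K ∩ O) β p := by
  have htrace := cbDeriv_inter_of_isOpen hKc hO hKO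
  have hder' : (derivedSet (K ∩ O)).Nonempty := by rwa [← cbDeriv_one, htrace, cbDeriv_one]
  obtain ⟨β, hβα, p, hp, hchar⟩ := (hK.of_isClosed_subset hKO inter_subset_left).exists_hasCBChar
    hKO (hder'.mono ((isClosed_iff_derivedSet_subset _).1 hKO)) (htrace α ▸ hα)
  exact ⟨β, hchar.pos hder', hβα, p, hp, hchar⟩

theorem exists_ge_cbDeriv_inter_nonempty (hK : IsClosed K) {x₀ : X} {O : ℕ → Set X}
    (hKO : ∀ n, IsClosed (K ∩ O n)) (hcover : ∀ z ∈ K, z ≠ x₀ ↔ ∃ n, z ∈ O n) {γ : Ordinal}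
    (hx₀ : x₀ ∈ cbDeriv K (γ + 1)) (N : ℕ) : ∃ k ≥ N, (cbDeriv K γ ∩ O k).Nonempty := by
  have hx₀K : x₀ ∈ K := hK.cbDeriv_subset _ hx₀
  have hC : IsClosed (⋃ k ∈ Iio N, K ∩ O k) := (finite_Iio N).isClosed_biUnion fun k _ => hKO k
  have hx₀C : x₀ ∉ ⋃ k ∈ Iio N, K ∩ O k := by
    simp only [mem_iUnion, not_exists]
    exact fun k _ hk => (hcover x₀ hx₀K).2 ⟨k, hk.2⟩ rfl
  rw [cbDeriv_add_one, mem_derivedSet, accPt_iff_nhds] at hx₀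
  obtain ⟨z, ⟨hzC, hzγ⟩, hzx⟩ := hx₀ _ (hC.isOpen_compl.mem_nhds hx₀C)
  have hzK : z ∈ K := hK.cbDeriv_subset γ hzγ
  obtain ⟨k, hk⟩ := (hcover z hzK).1 hzx
  exact ⟨k, not_lt.1 fun h => hzC (mem_biUnion h ⟨hzK, hk⟩), z, hzγ, hk⟩

end CantorBendixson

section Concatenation

universe u

variable {δ : ℕ → Ordinal.{u}}

/-- `succPartialSum δ n = (δ 0 + 1) + ⋯ + (δ (n - 1) + 1)` is where the `n`-th interval `[0, δ n]`
starts when the intervals are laid end to end. -/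
def succPartialSum (δ : ℕ → Ordinal.{u}) : ℕ → Ordinal.{u}
  | 0 => 0
  | n + 1 => succPartialSum δ n + (δ n + 1)

theorem strictMono_succPartialSum : StrictMono (succPartialSum δ) :=
  strictMono_nat_of_lt_succ fun _ => lt_add_of_pos_right _ (Order.lt_add_one_iff.2 zero_le)

theorem succPartialSum_add_mem_Ico {n : ℕ} {y : Ordinal} (hy : y ≤ δ n) :
    succPartialSum δ n + y ∈ Ico (succPartialSum δ n) (succPartialSum δ (n + 1)) :=
  ⟨le_self_add, add_lt_add_right (Order.lt_add_one_iff.2 hy) _⟩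

theorem exists_succPartialSum_add_eq {x : Ordinal} {N : ℕ} (hx : x < succPartialSum δ N) :
    ∃ n, ∃ y ≤ δ n, succPartialSum δ n + y = x := by
  obtain ⟨n, -, hn⟩ := mem_iUnion₂.1 (Ico_subset_biUnion_Ico N (succPartialSum δ) ⟨zero_le, hx⟩)
  refine ⟨n, x - succPartialSum δ n, ?_, Ordinal.add_sub_cancel_of_le hn.1⟩
  rw [← Order.lt_add_one_iff, ← add_lt_add_iff_left (succPartialSum δ n),
    Ordinal.add_sub_cancel_of_le hn.1]
  exact hn.2

theorem exists_mul_le_succPartialSum {c : Ordinal} (h : ∀ n, ∃ k ≥ n, c ≤ δ k) (m : ℕ) :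
    ∃ n, c * m ≤ succPartialSum δ n := by
  induction m with
  | zero => exact ⟨0, by simp⟩
  | succ m ih =>
    obtain ⟨n, hn⟩ := ih
    obtain ⟨k, hnk, hk⟩ := h n
    refine ⟨k + 1, ?_⟩
    calc c * ↑(m + 1) = c * m + c := by push_cast; rw [mul_add_one]
      _ ≤ succPartialSum δ k + (δ k + 1) :=
        add_le_add (hn.trans (strictMono_succPartialSum.monotone hnk)) (hk.trans le_self_add)

theorem isLUB_succPartialSum_omega0_opow {α : Ordinal.{u}} (hα : α ≠ 0)
    (hδ : ∀ n, δ n < ω ^ α) (hunb : ∀ γ < α, ∀ n, ∃ k ≥ n, ω ^ γ ≤ δ k) :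
    IsLUB (range (succPartialSum δ)) (ω ^ α) := by
  have hlt : ∀ n, succPartialSum δ n < ω ^ α := by
    intro n
    induction n with
    | zero => exact opow_pos α omega0_pos
    | succ n ih =>
      exact isPrincipal_add_omega0_opow α ih
        (isPrincipal_add_omega0_opow α (hδ n) (one_lt_opow.2 ⟨one_lt_omega0, hα⟩))
  refine ⟨forall_mem_range.2 fun n => (hlt n).le, fun b hb => not_lt.1 fun hbα => ?_⟩
  obtain ⟨γ, hγ, m, hm⟩ := (lt_omega0_opow hα).1 hbα
  obtain ⟨n, hn⟩ := exists_mul_le_succPartialSum (hunb γ hγ) m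
  exact (hm.trans_le (hn.trans (hb ⟨n, rfl⟩))).false

variable {X : Type*} [TopologicalSpace X] {x₀ : X} {A : ℕ → Set X} {o : Ordinal.{u}}
  {f : X → Ordinal.{u}}

theorem mem_Ico_of_eq_succPartialSum_add (e : ∀ n, A n ≃ₜ Iic (δ n))
    (hf : ∀ n (x : A n), f x = succPartialSum δ n + e n x) {n : ℕ} {x : X} (hx : x ∈ A n) :
    f x ∈ Ico (succPartialSum δ n) (succPartialSum δ (n + 1)) :=
  hf n ⟨x, hx⟩ ▸ succPartialSum_add_mem_Ico (e n ⟨x, hx⟩).2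

theorem le_of_eq_succPartialSum_add (hcover : ∀ x ≠ x₀, ∃ n, x ∈ A n)
    (e : ∀ n, A n ≃ₜ Iic (δ n)) (ho : IsLUB (range (succPartialSum δ)) o) (hf₀ : f x₀ = o)
    (hf : ∀ n (x : A n), f x = succPartialSum δ n + e n x) (x : X) : f x ≤ o := by
  by_cases hx : x = x₀
  · exact (hx ▸ hf₀).le
  · obtain ⟨n, hn⟩ := hcover x hx
    exact (mem_Ico_of_eq_succPartialSum_add e hf hn).2.le.trans (ho.1 ⟨n + 1, rfl⟩)

theorem continuous_of_eq_succPartialSum_add (hA : ∀ n, IsClopen (A n))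
    (hcover : ∀ x ≠ x₀, ∃ n, x ∈ A n) (e : ∀ n, A n ≃ₜ Iic (δ n))
    (ho : IsLUB (range (succPartialSum δ)) o) (hf₀ : f x₀ = o)
    (hf : ∀ n (x : A n), f x = succPartialSum δ n + e n x) : Continuous f := by
  have hfA := fun n x (hx : x ∈ A n) => mem_Ico_of_eq_succPartialSum_add e hf hx
  refine continuous_iff_continuousAt.2 fun x => ?_
  by_cases hx : x = x₀
  · subst hx
    refine tendsto_order.2 ⟨fun l hl => ?_, fun u hu => Eventually.of_forall fun y =>
      (le_of_eq_succPartialSum_add hcover e ho hf₀ hf y).trans_lt (hf₀ ▸ hu)⟩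
    obtain ⟨_, ⟨N, rfl⟩, hN⟩ := (lt_isLUB_iff ho).1 (hf₀ ▸ hl)
    have hC : IsClosed (⋃ k ∈ Iio N, A k) := (finite_Iio N).isClosed_biUnion fun k _ => (hA k).1
    have hxC : x ∉ ⋃ k ∈ Iio N, A k := by
      simp only [mem_iUnion, not_exists]
      exact fun k _ hk => (hfA k x hk).2.not_ge (hf₀ ▸ ho.1 ⟨k + 1, rfl⟩)
    filter_upwards [hC.isOpen_compl.mem_nhds hxC] with y hy
    by_cases hyx : y = x
    · exact hyx ▸ hf₀ ▸ hl
    · obtain ⟨n, hn⟩ := hcover y hyx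
      have hNn : N ≤ n := not_lt.1 fun h => hy (mem_biUnion h hn)
      exact hN.trans_le ((strictMono_succPartialSum.monotone hNn).trans (hfA n y hn).1)
  · obtain ⟨n, hn⟩ := hcover x hx
    refine ContinuousOn.continuousAt ?_ ((hA n).2.mem_nhds hn)
    rw [continuousOn_iff_continuous_domRestrict, show (A n).domRestrict f = _ from funext (hf n)]
    exact (Ordinal.isNormal_add_right _).continuous.comp
      (continuous_subtype_val.comp (e n).continuous)

theorem injective_of_eq_succPartialSum_add (hcover : ∀ x ≠ x₀, ∃ n, x ∈ A n)
    (e : ∀ n, A n ≃ₜ Iic (δ n)) (ho : IsLUB (range (succPartialSum δ)) o) (hf₀ : f x₀ = o)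
    (hf : ∀ n (x : A n), f x = succPartialSum δ n + e n x) : Injective f := by
  have hfA := fun n x (hx : x ∈ A n) => mem_Ico_of_eq_succPartialSum_add e hf hx
  have hlt : ∀ x ≠ x₀, f x < o := fun x hx => by
    obtain ⟨n, hn⟩ := hcover x hx
    exact (hfA n x hn).2.trans_le (ho.1 ⟨n + 1, rfl⟩)
  intro x y hxy
  by_cases hx : x = x₀ <;> by_cases hy : y = x₀
  · exact hx.trans hy.symm
  · exact absurd (hlt y hy) (hxy ▸ hx ▸ hf₀ ▸ lt_irrefl o)
  · exact absurd (hlt x hx) (hxy ▸ hy ▸ hf₀ ▸ lt_irrefl o)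
  obtain ⟨n, hxn⟩ := hcover x hx
  obtain ⟨m, hym⟩ := hcover y hy
  obtain rfl : n = m := strictMono_succPartialSum.monotone.pairwise_disjoint_on_Ico_succ.eq
    fun h => h.ne_of_mem (hfA n x hxn) (hfA m y hym) hxy
  rw [hf n ⟨x, hxn⟩, hf n ⟨y, hym⟩, add_right_inj] at hxy
  exact congrArg Subtype.val ((e n).injective (Subtype.ext hxy))

theorem exists_eq_of_eq_succPartialSum_add (e : ∀ n, A n ≃ₜ Iic (δ n))
    (ho : IsLUB (range (succPartialSum δ)) o) (hf₀ : f x₀ = o)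
    (hf : ∀ n (x : A n), f x = succPartialSum δ n + e n x) {v : Ordinal} (hv : v ≤ o) :
    ∃ x, f x = v := by
  rcases hv.eq_or_lt with rfl | hv
  · exact ⟨x₀, hf₀⟩
  obtain ⟨_, ⟨N, rfl⟩, hN⟩ := (lt_isLUB_iff ho).1 hv
  obtain ⟨n, y, hy, rfl⟩ := exists_succPartialSum_add_eq hN
  exact ⟨(e n).symm ⟨y, hy⟩, by rw [hf n, Homeomorph.apply_symm_apply]⟩

theorem nonempty_homeomorph_Iic_of_isClopen_partition [CompactSpace X]
    (hA : ∀ n, IsClopen (A n)) (hdisj : Pairwise (Disjoint on A)) (hcover : ⋃ n, A n = {x₀}ᶜ)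
    (e : ∀ n, A n ≃ₜ Iic (δ n)) (ho : IsLUB (range (succPartialSum δ)) o) :
    Nonempty (X ≃ₜ Iic o) := by
  classical
  have hcover' : ∀ x ≠ x₀, ∃ n, x ∈ A n := fun x hx => mem_iUnion.1 (hcover ▸ hx)
  let g : ({x₀}ᶜ : Set X) → Ordinal := iUnionLift A (fun n x => succPartialSum δ n + e n x)
    (fun i j x hi hj => by obtain rfl := hdisj.eq (not_disjoint_iff.2 ⟨x, hi, hj⟩); rfl)
    {x₀}ᶜ hcover.ge
  let f : X → Ordinal := fun x => if hx : x = x₀ then o else g ⟨x, hx⟩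
  have hf₀ : f x₀ = o := dif_pos rfl
  have hf : ∀ n (x : A n), f x = succPartialSum δ n + e n x := fun n x => by
    have hx : (x : X) ≠ x₀ := hcover.subset (mem_iUnion_of_mem n x.2)
    simp only [f, dif_neg hx]
    exact iUnionLift_mk x hx
  have hfo := le_of_eq_succPartialSum_add hcover' e ho hf₀ hf
  have hF : Bijective (codRestrict f (Iic o) hfo) :=
    ⟨fun x y h => injective_of_eq_succPartialSum_add hcover' e ho hf₀ hf (congrArg Subtype.val h),
      fun v => (exists_eq_of_eq_succPartialSum_add e ho hf₀ hf v.2).imp fun _ h => Subtype.ext h⟩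
  exact ⟨((continuous_of_eq_succPartialSum_add hA hcover' e ho hf₀ hf).codRestrict hfo
    ).homeoOfEquivCompactToT2 (f := Equiv.ofBijective _ hF)⟩

theorem IsCompact.nonempty_homeomorph_Iic_of_partition {X : Type*} [TopologicalSpace X]
    {K : Set X} (hK : IsCompact K) {x₀ : X} (hx₀ : x₀ ∈ K) {O : ℕ → Set X}
    (hO : ∀ n, IsOpen (O n)) (hKO : ∀ n, IsClosed (K ∩ O n)) (hdisj : Pairwise (Disjoint on O))
    (hcover : ∀ z ∈ K, z ≠ x₀ ↔ ∃ n, z ∈ O n) (e : ∀ n, ↥(K ∩ O n) ≃ₜ Iic (δ n))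
    (ho : IsLUB (range (succPartialSum δ)) o) : Nonempty (K ≃ₜ Iic o) := by
  have : CompactSpace K := isCompact_iff_compactSpace.1 hK
  refine nonempty_homeomorph_Iic_of_isClopen_partition (x₀ := ⟨x₀, hx₀⟩)
    (A := fun n => (↑) ⁻¹' (K ∩ O n))
    (fun n => ⟨(hKO n).preimage continuous_subtype_val, ?_⟩)
    (fun i j hij => ((hdisj hij).mono inter_subset_right inter_subset_right).preimage _) ?_
    (fun n => (IsEmbedding.subtypeVal.homeomorphOfSubsetRange (by simp)).trans (e n)) ho
  · rw [Subtype.preimage_coe_self_inter]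
    exact (hO n).preimage continuous_subtype_val
  · ext z
    simp [← hcover z z.2, Subtype.ext_iff]

end Concatenation

section Annuli

open Metric

theorem exists_mem_Ioc_succ_of_le_of_lt {β : Type*} [LinearOrder β] {r : ℕ → β} {t : β}
    (ht : t ≤ r 0) (h : ∃ n, r n < t) : ∃ n, t ∈ Ioc (r (n + 1)) (r n) := by
  classical
  obtain ⟨n, hn⟩ : ∃ n, Nat.find h = n + 1 :=
    Nat.exists_eq_succ_of_ne_zero fun h0 => (h0 ▸ Nat.find_spec h).not_ge ht
  have hlt := Nat.find_spec h
  rw [hn] at hlt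
  exact ⟨n, hlt, not_lt.1 (Nat.find_min h (by omega))⟩

variable {E : Type*} [MetricSpace E]

theorem AccPt.exists_strictAnti_radii {S : Set E} {x₀ : E} (hx₀ : AccPt x₀ (𝓟 S)) {D : Set ℝ}
    (hD : D.Countable) (R : ℝ) :
    ∃ r : ℕ → ℝ, StrictAnti r ∧ (∀ n, 0 < r n) ∧ (∀ ε > 0, ∃ n, r n < ε) ∧ R < r 0 ∧
      (∀ n, r n ∉ D) ∧ ∀ n, ∃ z ∈ S, dist z x₀ ∈ Ioo (r (n + 1)) (r n) := by
  have hDc : Dense Dᶜ := hD.dense_compl ℝ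
  have step : ∀ (n : ℕ) (ρ : ℝ), 0 < ρ → ∃ ρ' ∈ Dᶜ, ρ' ∈ Ioo 0 (min ρ (1 / (n + 1))) ∧
      ∃ z ∈ S, dist z x₀ ∈ Ioo ρ' ρ := by
    intro n ρ hρ
    obtain ⟨z, ⟨hzρ, hzS⟩, hzx⟩ := accPt_iff_nhds.1 hx₀ _ (ball_mem_nhds x₀ hρ)
    obtain ⟨ρ', hρ'D, hρ'0, hρ'⟩ :=
      hDc.exists_between (lt_min (dist_pos.2 hzx) Nat.one_div_pos_of_nat)
    rw [lt_min_iff] at hρ'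
    exact ⟨ρ', hρ'D, ⟨hρ'0, lt_min (hρ'.1.trans hzρ) hρ'.2⟩, z, hzS, hρ'.1, hzρ⟩
  choose! next hnextD hnext hwit using step
  obtain ⟨r₀, hr₀D, hr₀⟩ := hDc.exists_between (lt_add_one (max R 0))
  let r : ℕ → ℝ := fun n => Nat.rec r₀ (fun n ρ => next n ρ) n
  have hpos : ∀ n, 0 < r n := by
    intro n
    induction n with
    | zero => exact (le_max_right R 0).trans_lt hr₀.1
    | succ n ih => exact (hnext n _ ih).1
  refine ⟨r, strictAnti_nat_of_succ_lt fun n => (hnext n _ (hpos n)).2.trans_le (min_le_left _ _),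
    hpos, fun ε hε => ?_, (le_max_left R 0).trans_lt hr₀.1, ?_, fun n => hwit n _ (hpos n)⟩
  · obtain ⟨n, hn⟩ := exists_nat_one_div_lt hε
    exact ⟨n + 1, ((hnext n _ (hpos n)).2.trans_le (min_le_right _ _)).trans hn⟩
  · rintro (_ | n)
    · exact hr₀D
    · exact hnextD n _ (hpos n)

theorem IsCompact.exists_annuli {K : Set E} (hK : IsCompact K) (hKc : K.Countable) {x₀ : E}
    (hx₀ : x₀ ∈ K) {S : Set E} (hS : AccPt x₀ (𝓟 S)) :
    ∃ O : ℕ → Set E, (∀ n, IsOpen (O n)) ∧ (∀ n, IsClosed (K ∩ O n)) ∧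
      Pairwise (Disjoint on O) ∧ (∀ z ∈ K, z ≠ x₀ ↔ ∃ n, z ∈ O n) ∧ ∀ n, (S ∩ O n).Nonempty := by
  obtain ⟨R, hR⟩ := hK.isBounded.subset_ball x₀
  obtain ⟨r, hr, hpos, hsmall, hR0, hrD, hwit⟩ :=
    hS.exists_strictAnti_radii (hKc.image (dist · x₀)) R
  have hrK : ∀ z ∈ K, ∀ n, dist z x₀ ≠ r n := fun z hz n h => hrD n ⟨z, hz, h⟩
  have hdist : Continuous (dist · x₀) := continuous_id.dist continuous_const
  refine ⟨fun n => (dist · x₀) ⁻¹' Ioo (r (n + 1)) (r n), fun n => isOpen_Ioo.preimage hdist,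
    fun n => ?_, hr.antitone.pairwise_disjoint_on_Ioo_succ.mono fun _ _ h => h.preimage _,
    fun z hz => ⟨fun hzx => ?_, ?_⟩, fun n => hwit n⟩
  · -- no point of `K` lies on a sphere of radius `r n`, so the open annulus is closed in `K`
    have : K ∩ (dist · x₀) ⁻¹' Ioo (r (n + 1)) (r n) =
        K ∩ (dist · x₀) ⁻¹' Icc (r (n + 1)) (r n) := by
      ext z
      refine and_congr_right fun hz => ⟨fun h => ⟨h.1.le, h.2.le⟩,
        fun h => ⟨h.1.lt_of_ne (hrK z hz _).symm, h.2.lt_of_ne (hrK z hz _)⟩⟩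
    rw [this]
    exact hK.isClosed.inter (isClosed_Icc.preimage hdist)
  · obtain ⟨n, hn⟩ := exists_mem_Ioc_succ_of_le_of_lt ((mem_ball.1 (hR hz)).le.trans hR0.le)
      (hsmall _ (dist_pos.2 hzx))
    exact ⟨n, hn.1, hn.2.lt_of_ne (hrK z hz n)⟩
  · rintro ⟨n, hn⟩ rfl
    exact (hpos (n + 1)).not_gt (by simpa using hn.1)

end Annuli

theorem stmt3_general {E : Type*} [MetricSpace E] (α : Ordinal) (hα : 1 < α)
    (H : ∀ β : Ordinal, 0 < β → β < α → ∀ p : ℕ, ∀ K' : Set E,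
      IsCompact K' → K'.Countable → HasCBChar K' β p →
      Nonempty (↥K' ≃ₜ ↥(Set.Iic (ω ^ β * (p : Ordinal)))))
    (K : Set E) (hK : IsCompact K) (hKcount : K.Countable) (hchar : HasCBChar K α 1) :
    Nonempty (↥K ≃ₜ ↥(Set.Iic (ω ^ α))) := by
  have hKc := hK.isClosed
  obtain ⟨x₀, hx₀⟩ := ncard_eq_one.1 hchar.2.2
  have hx₀α : x₀ ∈ cbDeriv K α := hx₀ ▸ mem_singleton x₀
  have hx₀K : x₀ ∈ K := hKc.cbDeriv_subset α hx₀α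
  have hacc : AccPt x₀ (𝓟 (derivedSet K)) := by
    have := hKc.cbDeriv_anti (Order.add_one_le_of_lt hα) hx₀α
    rwa [cbDeriv_add_one, cbDeriv_one] at this
  obtain ⟨O, hO, hKO, hdisj, hcover, hder⟩ := hK.exists_annuli hKcount hx₀K hacc
  have hαO : ∀ n, cbDeriv K α ∩ O n = ∅ := fun n => by
    rw [hx₀, singleton_inter_eq_empty]
    exact fun h => (hcover x₀ hx₀K).2 ⟨n, h⟩ rfl
  choose β hβ0 hβα p hp hcharO using fun n =>
    hK.exists_hasCBChar_inter_of_isOpen hKc (hO n) (hKO n) (hαO n) (hder n)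
  have hunb : ∀ γ < α, ∀ N, ∃ k ≥ N, ω ^ γ ≤ ω ^ β k * (p k : Ordinal) := by
    intro γ hγ N
    obtain ⟨k, hk, hne⟩ := exists_ge_cbDeriv_inter_nonempty hKc hKO hcover
      (hKc.cbDeriv_anti (Order.add_one_le_of_lt hγ) hx₀α) N
    rw [← cbDeriv_inter_of_isOpen hKc (hO k) (hKO k)] at hne
    exact ⟨k, hk, (opow_le_opow_right omega0_pos ((hcharO k).le_of_nonempty (hKO k) hne)).trans
      (le_mul_left _ (by exact_mod_cast hp k))⟩
  exact hK.nonempty_homeomorph_Iic_of_partition hx₀K hO hKO hdisj hcover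
    (fun n => (H _ (hβ0 n) (hβα n) _ _ (hK.of_isClosed_subset (hKO n) inter_subset_left)
      (hKcount.mono inter_subset_left) (hcharO n)).some)
    (isLUB_succPartialSum_omega0_opow (zero_lt_one.trans hα).ne'
      (fun n => opow_mul_lt_opow (natCast_lt_omega0 _) (hβα n)) hunb)

theorem stmt3 {E : Type*} [MetricSpace E] (α : Ordinal) (hα : 1 < α) (hαcount : α < ω_ 1)
    (H : ∀ β : Ordinal, 0 < β → β < α → ∀ p : ℕ, ∀ K' : Set E,
      IsCompact K' → K'.Countable → HasCBChar K' β p →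
      Nonempty (↥K' ≃ₜ ↥(Set.Iic (ω ^ β * (p : Ordinal)))))
    (K : Set E) (hK : IsCompact K) (hKcount : K.Countable) (hchar : HasCBChar K α 1) :
    Nonempty (↥K ≃ₜ ↥(Set.Iic (ω ^ α))) :=
  stmt3_general α hα H K hK hKcount hchar
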